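/- arXiv:math/9502208 — 4 statements merged into one kernel-verified Lean document; each statement's English description precedes it below -/
import Mathlib

section
/- The Lie algebra g₇ is strictly nonsingular, and its center equals span{W}. -/
noncomputable section

/-- The bracket of the Lie algebra g₇ on ℝ⁷ with basis X₁,X₂,Y₁,Y₂,Z₁,Z₂,W
at coordinates 0,…,6. -/
def br7 (u v : Fin 7 → ℝ) : Fin 7 → ℝ :=
  ![0, 0, 0, 0,
    u 0 * v 2 - u 2 * v 0 + (u 1 * v 3 - u 3 * v 1),
    u 0 * v 3 - u 3 * v 0,
    u 0 * v 4 - u 4 * v 0 + (u 1 * v 5 - u 5 * v 1) + (u 2 * v 3 - u 3 * v 2)]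

def Wv : Fin 7 → ℝ := Pi.single 6 1

/-!
The center is read off by bracketing with `X₁`, `X₂` and `Y₂`. If `X` is not central, let its
first nonzero coordinate among `X₁, X₂, Y₁, Y₂, Z₁, Z₂` pair it with `Z₁, Z₂, Y₂, Y₁, X₁, X₂`
respectively: since the earlier coordinates vanish, the bracket of `X` with a suitable multiple
of that basis vector has no `Z₁`, `Z₂` components and equals `W`. As `[X, ·]` is linear, every
multiple of `W` is then a bracket `[X, Y]`.
-/

lemma br7_smul_right (u v : Fin 7 → ℝ) (c : ℝ) : br7 u (c • v) = c • br7 u v := by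
  ext i
  fin_cases i <;> simp [br7] <;> ring

lemma eq_smul_Wv_iff (u : Fin 7 → ℝ) :
    u = u 6 • Wv ↔ u 0 = 0 ∧ u 1 = 0 ∧ u 2 = 0 ∧ u 3 = 0 ∧ u 4 = 0 ∧ u 5 = 0 := by
  constructor
  · intro h
    refine ⟨?_, ?_, ?_, ?_, ?_, ?_⟩ <;> rw [h] <;> simp [Wv]
  · rintro ⟨h0, h1, h2, h3, h4, h5⟩
    ext i
    fin_cases i <;> simp [Wv, *]

lemma forall_br7_eq_zero_iff (u : Fin 7 → ℝ) : (∀ v, br7 u v = 0) ↔ u = u 6 • Wv := by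
  rw [eq_smul_Wv_iff]
  constructor
  · intro h
    have hb (i j : Fin 7) := congrFun (h (Pi.single i 1)) j
    refine ⟨?_, ?_, ?_, ?_, ?_, ?_⟩
    · simpa [br7] using hb 3 5
    · simpa [br7] using hb 3 4
    · simpa [br7] using hb 3 6
    · simpa [br7] using hb 0 5
    · simpa [br7] using hb 0 6
    · simpa [br7] using hb 1 6
  · rintro ⟨h0, h1, h2, h3, h4, h5⟩ v
    ext i
    fin_cases i <;> simp [br7, *]

lemma mem_span_Wv_iff (u : Fin 7 → ℝ) : u ∈ Submodule.span ℝ {Wv} ↔ u = u 6 • Wv := by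
  rw [Submodule.mem_span_singleton]
  constructor
  · rintro ⟨a, rfl⟩
    simp [Wv]
  · exact fun h => ⟨u 6, h.symm⟩

lemma exists_br7_eq_Wv {X : Fin 7 → ℝ} (hX : X ≠ X 6 • Wv) : ∃ Y, br7 X Y = Wv := by
  rw [Ne, eq_smul_Wv_iff] at hX
  by_cases h0 : X 0 = 0; swap
  · exact ⟨Pi.single 4 (X 0)⁻¹, by ext i; fin_cases i <;> simp [br7, Wv, *]⟩
  by_cases h1 : X 1 = 0; swap
  · exact ⟨Pi.single 5 (X 1)⁻¹, by ext i; fin_cases i <;> simp [br7, Wv, *]⟩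
  by_cases h2 : X 2 = 0; swap
  · exact ⟨Pi.single 3 (X 2)⁻¹, by ext i; fin_cases i <;> simp [br7, Wv, *]⟩
  by_cases h3 : X 3 = 0; swap
  · exact ⟨Pi.single 2 (-(X 3)⁻¹), by ext i; fin_cases i <;> simp [br7, Wv, *]⟩
  by_cases h4 : X 4 = 0; swap
  · exact ⟨Pi.single 0 (-(X 4)⁻¹), by ext i; fin_cases i <;> simp [br7, Wv, *]⟩
  by_cases h5 : X 5 = 0; swap
  · exact ⟨Pi.single 1 (-(X 5)⁻¹), by ext i; fin_cases i <;> simp [br7, Wv, *]⟩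
  exact absurd ⟨h0, h1, h2, h3, h4, h5⟩ hX

/-- g₇ is strictly nonsingular: for every noncentral X and every central Z there is Y
with [X,Y] = Z; moreover the center of g₇ equals span{W}. -/
theorem stmt1 :
    (∀ X : Fin 7 → ℝ, (¬ ∀ v, br7 X v = 0) →
      ∀ Z : Fin 7 → ℝ, (∀ v, br7 Z v = 0) → ∃ Y, br7 X Y = Z) ∧
    {u : Fin 7 → ℝ | ∀ v, br7 u v = 0} =
      (Submodule.span ℝ {Wv} : Submodule ℝ (Fin 7 → ℝ)) := by
  refine ⟨fun X hX Z hZ => ?_, ?_⟩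
  · rw [forall_br7_eq_zero_iff] at hX hZ
    obtain ⟨Y, hY⟩ := exists_br7_eq_Wv hX
    exact ⟨Z 6 • Y, by rw [br7_smul_right, hY, ← hZ]⟩
  · ext u
    exact (forall_br7_eq_zero_iff u).trans (mem_span_Wv_iff u).symm
end
end

section
/- Let g be a finite-dimensional real Lie algebra that is strictly nonsingular, let z be its center, and let τ : g → ℝ be a linear functional whose restriction to z is not identically zero. Then the skew-symmetric bilinear form b_τ on the quotient vector space g/z defined by b_τ(X̄, Ȳ) = τ([X,Y]) (where X, Y are any representatives of X̄, Ȳ) is well defined and nondegenerate. -/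
namespace LieAlgebra

variable {R L : Type*} [CommRing R] [LieRing L] [LieAlgebra R L]

theorem lie_eq_lie_of_sub_mem_center {x x' y y' : L} (hx : x - x' ∈ center R L)
    (hy : y - y' ∈ center R L) : ⁅x, y⁆ = ⁅x', y'⁆ := by
  rw [LieModule.mem_maxTrivSubmodule] at hx hy
  have hxy : ⁅x - x', y⁆ = 0 := by rw [← lie_skew, hx y, neg_zero]
  rw [sub_lie, sub_eq_zero] at hxy
  rw [hxy, ← sub_eq_zero, ← lie_sub, hy x']

theorem mem_center_of_forall_apply_lie_eq_zero
    (hSN : ∀ X : L, X ∉ center R L → ∀ Z ∈ center R L, ∃ Y : L, ⁅X, Y⁆ = Z)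
    {τ : L →ₗ[R] R} (hτ : ∃ Z ∈ center R L, τ Z ≠ 0) {x : L} (hx : ∀ y : L, τ ⁅x, y⁆ = 0) :
    x ∈ center R L := by
  by_contra hxc
  obtain ⟨Z, hZ, hτZ⟩ := hτ
  obtain ⟨Y, rfl⟩ := hSN x hxc Z hZ
  exact hτZ (hx Y)

end LieAlgebra

theorem stmt4_general (L : Type*) [LieRing L] [LieAlgebra ℝ L]
    (hSN : ∀ X : L, X ∉ LieAlgebra.center ℝ L →
      ∀ Z ∈ LieAlgebra.center ℝ L, ∃ Y : L, ⁅X, Y⁆ = Z)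
    (τ : L →ₗ[ℝ] ℝ) (hτ : ∃ Z ∈ LieAlgebra.center ℝ L, τ Z ≠ 0) :
    (∀ x x' y y' : L, x - x' ∈ LieAlgebra.center ℝ L → y - y' ∈ LieAlgebra.center ℝ L →
      τ ⁅x, y⁆ = τ ⁅x', y'⁆) ∧
    (∀ x y : L, τ ⁅x, y⁆ = - τ ⁅y, x⁆) ∧
    (∀ x : L, (∀ y : L, τ ⁅x, y⁆ = 0) → x ∈ LieAlgebra.center ℝ L) :=
  ⟨fun _ _ _ _ hx hy => congrArg τ (LieAlgebra.lie_eq_lie_of_sub_mem_center hx hy),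
    fun x y => by rw [← lie_skew, map_neg],
    fun _ hx => LieAlgebra.mem_center_of_forall_apply_lie_eq_zero hSN hτ hx⟩

/-- Let g be a finite-dimensional real Lie algebra which is strictly nonsingular
(for every noncentral X and central Z there is Y with [X,Y] = Z), and let
τ : g → ℝ be a linear functional whose restriction to the center z is not
identically zero.  Then the skew-symmetric bilinear form b_τ(X̄,Ȳ) = τ([X,Y]) on
g/z is well defined (independent of representatives) and nondegenerate. -/
theorem stmt4 (L : Type*) [LieRing L] [LieAlgebra ℝ L] [FiniteDimensional ℝ L]
    (hSN : ∀ X : L, X ∉ LieAlgebra.center ℝ L →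
      ∀ Z ∈ LieAlgebra.center ℝ L, ∃ Y : L, ⁅X, Y⁆ = Z)
    (τ : L →ₗ[ℝ] ℝ) (hτ : ∃ Z ∈ LieAlgebra.center ℝ L, τ Z ≠ 0) :
    (∀ x x' y y' : L, x - x' ∈ LieAlgebra.center ℝ L → y - y' ∈ LieAlgebra.center ℝ L →
      τ ⁅x, y⁆ = τ ⁅x', y'⁆) ∧
    (∀ x y : L, τ ⁅x, y⁆ = - τ ⁅y, x⁆) ∧
    (∀ x : L, (∀ y : L, τ ⁅x, y⁆ = 0) → x ∈ LieAlgebra.center ℝ L) :=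
  stmt4_general L hSN τ hτ
end

section
/- The linear map Φ : ḡ₆ → ḡ₆ determined by Φ(X̄₁) = X̄₁, Φ(X̄₂) = X̄₂, Φ(Ȳ₁) = Ȳ₁, Φ(Ȳ₂) = Ȳ₂ + (1/2)Z̄₂, Φ(Z̄₁) = Z̄₁, Φ(Z̄₂) = Z̄₂ is a Lie algebra automorphism of ḡ₆, and it is almost inner: for every X ∈ ḡ₆ there exists A ∈ ḡ₆ with Φ(X) = X + [A, X]. -/
/-! Φ is the transvection `u ↦ u + (u₃ / 2) Z̄₂`, with `u₃` the Ȳ₂-coordinate. The bracket only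
reads the coordinates 0–3 and takes values in span{Z̄₁, Z̄₂}, so Φ fixes every bracket and
leaves brackets of its arguments unchanged: it is an automorphism. It is almost inner because
`(u₃ / 2) Z̄₂ = [A, u]` for `A = ½ X̄₁ - (u₂ / 2u₃) X̄₂` when `u₃ ≠ 0`, and for `A = 0` otherwise. -/

noncomputable section

/-- The bracket of the Lie algebra ḡ₆ on ℝ⁶ with basis X̄₁,X̄₂,Ȳ₁,Ȳ₂,Z̄₁,Z̄₂
at coordinates 0,…,5, determined by [X̄₁,Ȳ₁] = [X̄₂,Ȳ₂] = Z̄₁, [X̄₁,Ȳ₂] = Z̄₂,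
all other basis brackets zero. -/
def br6 (u v : Fin 6 → ℝ) : Fin 6 → ℝ :=
  ![0, 0, 0, 0,
    u 0 * v 2 - u 2 * v 0 + (u 1 * v 3 - u 3 * v 1),
    u 0 * v 3 - u 3 * v 0]

def X1 : Fin 6 → ℝ := Pi.single 0 1
def X2 : Fin 6 → ℝ := Pi.single 1 1
def Y1 : Fin 6 → ℝ := Pi.single 2 1
def Y2 : Fin 6 → ℝ := Pi.single 3 1
def Z1 : Fin 6 → ℝ := Pi.single 4 1
def Z2 : Fin 6 → ℝ := Pi.single 5 1

/-- The linear map with Φ(X̄₁)=X̄₁, Φ(X̄₂)=X̄₂, Φ(Ȳ₁)=Ȳ₁, Φ(Ȳ₂)=Ȳ₂+(1/2)Z̄₂,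
Φ(Z̄₁)=Z̄₁, Φ(Z̄₂)=Z̄₂. -/
def Phi (u : Fin 6 → ℝ) : Fin 6 → ℝ :=
  u 0 • X1 + u 1 • X2 + u 2 • Y1 + u 3 • (Y2 + (1/2 : ℝ) • Z2) + u 4 • Z1 + u 5 • Z2

lemma Phi_eq_add_smul_Z2 (u : Fin 6 → ℝ) : Phi u = u + (u 3 / 2) • Z2 := by
  funext i
  fin_cases i <;> simp [Phi, X1, X2, Y1, Y2, Z1, Z2]
  ring

lemma Z2_apply_three : Z2 3 = 0 := by simp [Z2]

lemma br6_apply_three (u v : Fin 6 → ℝ) : br6 u v 3 = 0 := rfl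

lemma Phi_br6 (u v : Fin 6 → ℝ) : Phi (br6 u v) = br6 u v := by
  simp [Phi_eq_add_smul_Z2, br6_apply_three]

lemma br6_congr {u u' v v' : Fin 6 → ℝ} (hu : ∀ i : Fin 6, i.val < 4 → u i = u' i)
    (hv : ∀ i : Fin 6, i.val < 4 → v i = v' i) : br6 u v = br6 u' v' := by
  simp only [br6, hu 0 (by decide), hu 1 (by decide), hu 2 (by decide), hu 3 (by decide),
    hv 0 (by decide), hv 1 (by decide), hv 2 (by decide), hv 3 (by decide)]

lemma Phi_apply_of_lt_four (u : Fin 6 → ℝ) {i : Fin 6} (hi : i.val < 4) : Phi u i = u i := by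
  have hZ2 : Z2 i = 0 := Pi.single_eq_of_ne (by omega) 1
  simp [Phi_eq_add_smul_Z2, hZ2]

lemma br6_Phi_Phi (u v : Fin 6 → ℝ) : br6 (Phi u) (Phi v) = br6 u v :=
  br6_congr (fun _ => Phi_apply_of_lt_four u) (fun _ => Phi_apply_of_lt_four v)

lemma isLinearMap_Phi : IsLinearMap ℝ Phi where
  map_add u v := by
    simp only [Phi_eq_add_smul_Z2, Pi.add_apply, add_div, add_smul]
    abel
  map_smul c u := by
    simp only [Phi_eq_add_smul_Z2, Pi.smul_apply, smul_eq_mul, smul_add, smul_smul]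
    ring_nf

lemma bijective_Phi : Function.Bijective Phi := by
  refine Function.bijective_iff_has_inverse.mpr ⟨fun u => u - (u 3 / 2) • Z2, ?_, ?_⟩ <;>
    intro u <;> simp [Phi_eq_add_smul_Z2, Z2_apply_three]

lemma exists_br6_eq_smul_Z2 (u : Fin 6 → ℝ) : ∃ A, br6 A u = (u 3 / 2) • Z2 := by
  by_cases hu : u 3 = 0
  · refine ⟨0, ?_⟩
    funext i
    fin_cases i <;> simp [br6, Z2, hu]
  · refine ⟨![1 / 2, -u 2 / (2 * u 3), 0, 0, 0, 0], ?_⟩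
    funext i
    fin_cases i <;> simp [br6, Z2]
    · field_simp
      ring
    · ring

/-- Φ is a Lie algebra automorphism of ḡ₆ and is almost inner. -/
theorem stmt6 :
    IsLinearMap ℝ Phi ∧ Function.Bijective Phi ∧
    (∀ u v, Phi (br6 u v) = br6 (Phi u) (Phi v)) ∧
    (∀ X, ∃ A, Phi X = X + br6 A X) := by
  refine ⟨isLinearMap_Phi, bijective_Phi, fun u v => by rw [Phi_br6, br6_Phi_Phi], fun X => ?_⟩
  obtain ⟨A, hA⟩ := exists_br6_eq_smul_Z2 X
  exact ⟨A, by rw [Phi_eq_add_smul_Z2, hA]⟩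
end
end

section
/- The linear map Ψ₂ : ḡ₆ → ḡ₆ determined by Ψ₂(X̄₁) = X̄₁, Ψ₂(X̄₂) = X̄₂ + (1/4)Z̄₁, Ψ₂(Ȳ₁) = Ȳ₁, Ψ₂(Ȳ₂) = Ȳ₂ − Z̄₁ − Z̄₂, Ψ₂(Z̄₁) = Z̄₁, Ψ₂(Z̄₂) = Z̄₂ is a Lie algebra automorphism of ḡ₆, and it is almost inner: for every X ∈ ḡ₆ there exists A ∈ ḡ₆ with Ψ₂(X) = X + [A, X]. -/
/-!
Write `Ψ₂ = 1 + D` with `D X = (x₂/4 - y₂) Z̄₁ - y₂ Z̄₂`, where `x₂, y₂` are the `X̄₂, Ȳ₂`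
coordinates of `X`. The map `D` takes values in the centre `span {Z̄₁, Z̄₂}` and vanishes on it,
which is also the derived algebra. Hence `D ∘ D = 0`, so `1 + D` is invertible, and
`Ψ₂ [X, Y] = [X, Y] = [Ψ₂ X, Ψ₂ Y]`.

Ψ₂ is almost inner because `D X ∈ [ḡ₆, X]` for every `X`. If `X` has a nonzero `X̄₁` or `Ȳ₂`
coordinate, then `ad X` maps onto the centre. Otherwise `D X = (x₂/4) Z̄₁ = [-Ȳ₂/4, X]`.
-/

noncomputable section

/-- The linear map with Ψ₂(X̄₁)=X̄₁, Ψ₂(X̄₂)=X̄₂+(1/4)Z̄₁, Ψ₂(Ȳ₁)=Ȳ₁,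
Ψ₂(Ȳ₂)=Ȳ₂−Z̄₁−Z̄₂, Ψ₂(Z̄₁)=Z̄₁, Ψ₂(Z̄₂)=Z̄₂. -/
def Psi2 (u : Fin 6 → ℝ) : Fin 6 → ℝ :=
  u 0 • X1 + u 1 • (X2 + (1/4 : ℝ) • Z1) + u 2 • Y1 +
  u 3 • (Y2 - Z1 - Z2) + u 4 • Z1 + u 5 • Z2

def psi2Offset : Module.End ℝ (Fin 6 → ℝ) where
  toFun u := ![0, 0, 0, 0, u 1 / 4 - u 3, -u 3]
  map_add' u v := by
    ext i
    fin_cases i <;> simp <;> ring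
  map_smul' c u := by
    ext i
    fin_cases i <;> simp
    ring

lemma psi2Offset_apply (u : Fin 6 → ℝ) :
    psi2Offset u = ![0, 0, 0, 0, u 1 / 4 - u 3, -u 3] := rfl

lemma Psi2_eq_one_add_psi2Offset : Psi2 = ⇑(1 + psi2Offset) := by
  ext u i
  fin_cases i <;>
    simp [Psi2, psi2Offset_apply, X1, X2, Y1, Y2, Z1, Z2] <;> ring

lemma Psi2_apply (u : Fin 6 → ℝ) : Psi2 u = u + psi2Offset u := by
  simp [Psi2_eq_one_add_psi2Offset]

lemma psi2Offset_mul_self : psi2Offset * psi2Offset = 0 := by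
  ext u i
  fin_cases i <;> simp [psi2Offset_apply]

lemma psi2Offset_br6 (u v : Fin 6 → ℝ) : psi2Offset (br6 u v) = 0 := by
  ext i
  fin_cases i <;> simp [psi2Offset_apply, br6]

lemma br6_add_psi2Offset (u v : Fin 6 → ℝ) :
    br6 (u + psi2Offset u) (v + psi2Offset v) = br6 u v := by
  ext i
  fin_cases i <;> simp [psi2Offset_apply, br6]

lemma exists_br6_eq_central {x : Fin 6 → ℝ} (hx : x 0 ≠ 0 ∨ x 3 ≠ 0) (c d : ℝ) :
    ∃ A, br6 A x = ![0, 0, 0, 0, c, d] := by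
  rcases hx with hx0 | hx3
  · refine ⟨![0, 0, (d * x 1 / x 0 - c) / x 0, -d / x 0, 0, 0], ?_⟩
    ext i
    fin_cases i <;> simp [br6]
    · field_simp
      ring
    · field_simp
  · refine ⟨![d / x 3, (c - d * x 2 / x 3) / x 3, 0, 0, 0, 0], ?_⟩
    ext i
    fin_cases i <;> simp [br6]
    · field_simp
      ring
    · field_simp

lemma exists_br6_eq_psi2Offset (x : Fin 6 → ℝ) : ∃ A, br6 A x = psi2Offset x := by
  by_cases hx : x 0 ≠ 0 ∨ x 3 ≠ 0
  · exact exists_br6_eq_central hx _ _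
  · obtain ⟨hx0, hx3⟩ : x 0 = 0 ∧ x 3 = 0 := by tauto
    refine ⟨(-1 / 4 : ℝ) • Y2, ?_⟩
    ext i
    fin_cases i <;> simp [br6, psi2Offset_apply, Y2, hx0, hx3]
    ring

/-- Ψ₂ is a Lie algebra automorphism of ḡ₆ and is almost inner. -/
theorem stmt14 :
    IsLinearMap ℝ Psi2 ∧ Function.Bijective Psi2 ∧
    (∀ u v, Psi2 (br6 u v) = br6 (Psi2 u) (Psi2 v)) ∧
    (∀ X, ∃ A, Psi2 X = X + br6 A X) := by
  refine ⟨?_, ?_, fun u v => ?_, fun x => ?_⟩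
  · rw [Psi2_eq_one_add_psi2Offset]
    exact (1 + psi2Offset).isLinear
  · rw [Psi2_eq_one_add_psi2Offset]
    have hnil : IsNilpotent psi2Offset := ⟨2, by rw [pow_two, psi2Offset_mul_self]⟩
    exact (Module.End.isUnit_iff _).mp hnil.isUnit_one_add
  · rw [Psi2_apply, Psi2_apply, Psi2_apply, psi2Offset_br6, add_zero, br6_add_psi2Offset]
  · obtain ⟨A, hA⟩ := exists_br6_eq_psi2Offset x
    exact ⟨A, by rw [Psi2_apply, hA]⟩
end
end
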